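/- Let ≼ be a monomial order on the monomials of Z2[X] such that s ≺ α for every α ∈ C. Then C ⊆ S_𝓕, i.e. every α ∈ C is non-residual with respect to 𝓕 and ≼. -/

import Mathlib

open MvPolynomial

/-- Monomials in the variables `σ`, represented by their exponent vectors. -/
abbrev Mon (σ : Type*) := σ →₀ ℕ

/-- A monomial order: a total order on monomials such that `1 ≼ t` for every monomial `t`
and `t ≼ u → t·v ≼ u·v` (written additively on exponent vectors). -/
structure MonOrd (σ : Type*) where
  le : Mon σ → Mon σ → Prop
  le_refl : ∀ t, le t t
  le_trans : ∀ t u v, le t u → le u v → le t v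
  le_antisymm : ∀ t u, le t u → le u t → t = u
  le_total : ∀ t u, le t u ∨ le u t
  zero_le : ∀ t, le 0 t
  add_le_add : ∀ t u v, le t u → le (t + v) (u + v)

/-- Strict version of a monomial order. -/
def MonOrd.lt {σ : Type*} (μ : MonOrd σ) (t u : Mon σ) : Prop := μ.le t u ∧ t ≠ u

/-- The extension of a monomial order (given by the relation `r` on monomials) to polynomials:
`g ≼ f` iff `g = f` or the greatest monomial on which `f` and `g` differ occurs in `f`.
(This is the closed form of the recursive definition: `g ≼ f` iff `g = f`, or
`HT g ≺ HT f`, or `HT g = HT f` and `g - HT g ≼ f - HT f`, with `0` the least polynomial.) -/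
def polyLe {σ : Type*} (r : Mon σ → Mon σ → Prop) (g f : MvPolynomial σ (ZMod 2)) : Prop :=
  g = f ∨ ∃ t, t ∈ f.support ∧ t ∉ g.support ∧
    ∀ u : Mon σ, ((u ∈ f.support ∧ u ∉ g.support) ∨ (u ∈ g.support ∧ u ∉ f.support)) → r u t

/-- Strict extension of a monomial order to polynomials. -/
def polyLt {σ : Type*} (r : Mon σ → Mon σ → Prop) (g f : MvPolynomial σ (ZMod 2)) : Prop :=
  polyLe r g f ∧ g ≠ f

/-- `S_F`: the set of non-residual polynomials with respect to `F` and the monomial order `r`,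
i.e. those `f` admitting a `g` with `f + g ∈ ⟨F⟩` and `g ≺ f`. -/
def SF {σ : Type*} (r : Mon σ → Mon σ → Prop) (F : Set (MvPolynomial σ (ZMod 2))) :
    Set (MvPolynomial σ (ZMod 2)) :=
  {f | ∃ g, f + g ∈ Ideal.span F ∧ polyLt r g f}

/-- `t` is the head monomial (`r`-greatest monomial) of the polynomial `f`. -/
def IsHT {σ : Type*} (r : Mon σ → Mon σ → Prop) (f : MvPolynomial σ (ZMod 2)) (t : Mon σ) :
    Prop :=
  t ∈ f.support ∧ ∀ u ∈ f.support, r u t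

/-- `HT(S)`: the set of head monomials (as polynomials) of the nonzero elements of `S`. -/
def HTset {σ : Type*} (r : Mon σ → Mon σ → Prop) (S : Set (MvPolynomial σ (ZMod 2))) :
    Set (MvPolynomial σ (ZMod 2)) :=
  {p | ∃ f ∈ S, f ≠ 0 ∧ ∃ t, IsHT r f t ∧ p = monomial t 1}

/-- The divisibility (componentwise) order `◁` on monomials. -/
def triMon {σ : Type*} (t u : Mon σ) : Prop := ∀ x, t x ≤ u x

/-- The order `◁` on polynomials: `p ◁ q` iff there is an injective map `φ` from the
monomials of `p` to the monomials of `q` with `t ◁ φ t` for each monomial `t` of `p`. -/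
def triPoly {σ : Type*} (p q : MvPolynomial σ (ZMod 2)) : Prop :=
  ∃ φ : Mon σ → Mon σ, Set.InjOn φ ↑p.support ∧ ∀ t ∈ p.support, φ t ∈ q.support ∧ triMon t (φ t)

/-- Upward closure with respect to `◁`. -/
def upClo {σ : Type*} (A : Set (MvPolynomial σ (ZMod 2))) : Set (MvPolynomial σ (ZMod 2)) :=
  {q | ∃ p ∈ A, triPoly p q}

/-- `Min_◁(A)`: the `◁`-minimal elements of `A`. -/
def minTri {σ : Type*} (A : Set (MvPolynomial σ (ZMod 2))) : Set (MvPolynomial σ (ZMod 2)) :=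
  {p | p ∈ A ∧ ∀ q ∈ A, triPoly q p → q = p}

/-- `G` is a Gröbner basis of the ideal `I` with respect to the monomial order `r`. -/
def IsGB {σ : Type*} (r : Mon σ → Mon σ → Prop) (G : Finset (MvPolynomial σ (ZMod 2)))
    (I : Ideal (MvPolynomial σ (ZMod 2))) : Prop :=
  (↑G : Set (MvPolynomial σ (ZMod 2))) ⊆ ↑I ∧
    Ideal.span (↑G : Set (MvPolynomial σ (ZMod 2))) = I ∧
    Ideal.span (HTset r (↑I : Set (MvPolynomial σ (ZMod 2)))) = Ideal.span (HTset r ↑G)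

/-- `G` is a reduced Gröbner basis of `I` with respect to `r`. -/
def IsReducedGB {σ : Type*} (r : Mon σ → Mon σ → Prop) (G : Finset (MvPolynomial σ (ZMod 2)))
    (I : Ideal (MvPolynomial σ (ZMod 2))) : Prop :=
  IsGB r G I ∧ ∀ f ∈ G, ¬ ∀ t ∈ f.support,
    (monomial t 1 : MvPolynomial σ (ZMod 2)) ∈
      Ideal.span (HTset r ((↑G : Set (MvPolynomial σ (ZMod 2))) \ {f}))

/-- The variable set `X`: the special variables `s, ℓ, c, c̄, b, b̄` together with, for each
`0 ≤ i ≤ n`, the variables `s_i, f_i, q_{ji}, c_{ji}, b_{ji}` (`1 ≤ j ≤ 4`, encoded by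
`j : Fin 4`) and their barred copies (`bar = true`). -/
inductive MVar (n : ℕ) : Type where
  | vs | vl | vc | vcb | vb | vbb
  | vS (bar : Bool) (i : Fin (n+1))
  | vF (bar : Bool) (i : Fin (n+1))
  | vQ (bar : Bool) (j : Fin 4) (i : Fin (n+1))
  | vC (bar : Bool) (j : Fin 4) (i : Fin (n+1))
  | vB (bar : Bool) (j : Fin 4) (i : Fin (n+1))
deriving DecidableEq

open MVar

abbrev MPoly (n : ℕ) := MvPolynomial (MVar n) (ZMod 2)

/-- `e(n) = 2^(2^n)`. -/
def en (n : ℕ) : ℕ := 2 ^ 2 ^ n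

/-- The set `P_0` (barred copy if `bar = true`). -/
def P0 (n : ℕ) (bar : Bool) : Set (MPoly n) :=
  {p | ∃ j : Fin 4, p =
    X (vB bar j 0) ^ 2 * X (vC bar j 0) * X (vF bar 0) + X (vC bar j 0) * X (vS bar 0)}

/-- The set `P_m` for `m = i+1`, `i : Fin n` (barred copy if `bar = true`).
Here `i.succ` plays the role of `m` and `i.castSucc` the role of `m-1`; the indices
`1,2,3,4` of the paper are encoded as `0,1,2,3 : Fin 4`. -/
def Pm (n : ℕ) (bar : Bool) (i : Fin n) : Set (MPoly n) :=
  ({ X (vQ bar 0 i.succ) * X (vC bar 0 i.castSucc) * X (vS bar i.castSucc) + X (vS bar i.succ),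
    X (vQ bar 1 i.succ) * X (vC bar 1 i.castSucc) * X (vS bar i.castSucc)
      + X (vQ bar 0 i.succ) * X (vB bar 0 i.castSucc) * X (vC bar 0 i.castSucc)
        * X (vF bar i.castSucc),
    X (vQ bar 2 i.succ) * X (vC bar 2 i.castSucc) * X (vF bar i.castSucc)
      + X (vQ bar 1 i.succ) * X (vC bar 1 i.castSucc) * X (vF bar i.castSucc),
    X (vQ bar 2 i.succ) * X (vB bar 0 i.castSucc) * X (vC bar 2 i.castSucc)
        * X (vS bar i.castSucc)
      + X (vQ bar 1 i.succ) * X (vB bar 3 i.castSucc) * X (vC bar 1 i.castSucc)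
        * X (vS bar i.castSucc),
    X (vQ bar 3 i.succ) * X (vB bar 3 i.castSucc) * X (vC bar 3 i.castSucc)
        * X (vF bar i.castSucc)
      + X (vQ bar 2 i.succ) * X (vC bar 2 i.castSucc) * X (vS bar i.castSucc),
    X (vQ bar 3 i.succ) * X (vC bar 3 i.castSucc) * X (vS bar i.castSucc)
      + X (vF bar i.succ) } : Set (MPoly n))
  ∪ {p | ∃ j : Fin 4, p =
      X (vQ bar 1 i.succ) * X (vB bar 2 i.castSucc) * X (vB bar j i.succ) * X (vC bar j i.succ)
          * X (vF bar i.castSucc)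
        + X (vQ bar 1 i.succ) * X (vB bar 1 i.castSucc) * X (vC bar j i.succ)
          * X (vF bar i.castSucc)}

/-- The set `P = P_0 ∪ P_1 ∪ ⋯ ∪ P_n`; for `bar = true` this is the barred copy `P̄`
(the image of `P` under the substitution replacing each variable by its barred version). -/
def PP (n : ℕ) (bar : Bool) : Set (MPoly n) := P0 n bar ∪ ⋃ i : Fin n, Pm n bar i

/-- The set `G` of seven extra binomials. -/
def GG (n : ℕ) : Set (MPoly n) :=
  { X (vB false 3 (Fin.last n)) * X vl * X vb + X vl * X vc,
    X (vB false 3 (Fin.last n)) * X vl * X vbb + X vl * X vcb,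
    X (vC false 3 (Fin.last n)) * X (vF false (Fin.last n)) + X vl,
    X (vC true 3 (Fin.last n)) * X (vF true (Fin.last n))
      + X (vC false 3 (Fin.last n)) * X (vS false (Fin.last n)),
    X (vB true 3 (Fin.last n)) * X (vC false 3 (Fin.last n)) * X (vS false (Fin.last n))
      + X (vC false 3 (Fin.last n)) * X (vS false (Fin.last n)) * X vb,
    X (vB true 3 (Fin.last n)) * X (vC false 3 (Fin.last n)) * X (vS false (Fin.last n))
      + X (vC false 3 (Fin.last n)) * X (vS false (Fin.last n)) * X vbb,
    X (vC true 3 (Fin.last n)) * X (vS true (Fin.last n)) + X vs }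

/-- The set `𝓕 = P ∪ P̄ ∪ G`. -/
def FF (n : ℕ) : Set (MPoly n) := PP n false ∪ PP n true ∪ GG n

/-- The set `C = {ℓ c̄^{m1} c^{m2} : m1 + m2 = e(n)}` of monomials. -/
def Cmon (n : ℕ) : Set (Mon (MVar n)) :=
  {α | ∃ m1 m2 : ℕ, m1 + m2 = en n ∧
    α = Finsupp.single vl 1 + Finsupp.single vcb m1 + Finsupp.single vc m2}

/-- The set `D = {ℓ^j c̄^{m1} c^{m2} : j ∈ {0,1}, j + m1 + m2 ≤ e(n)}` of monomials. -/
def Dmon (n : ℕ) : Set (Mon (MVar n)) :=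
  {α | ∃ j m1 m2 : ℕ, j ≤ 1 ∧ j + m1 + m2 ≤ en n ∧
    α = Finsupp.single vl j + Finsupp.single vcb m1 + Finsupp.single vc m2}

/-- An injective rank function on the variables realizing the variable ordering
(from least to greatest): `s, c, c̄, ℓ, b, b̄`; then `s_0,…,s_n`; `f_0,…,f_n`;
`c_{10},…,c_{1n}; …; c_{40},…,c_{4n}`; `b_{10},…,b_{4n}`; `q_{10},…,q_{4n}`;
then the barred variables in the same pattern. -/
def vrank (n : ℕ) : MVar n → ℕ
  | .vs => 0
  | .vc => 1
  | .vcb => 2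
  | .vl => 3
  | .vb => 4
  | .vbb => 5
  | .vS bar i => 6 + (cond bar (14 * (n+1)) 0) + (i : ℕ)
  | .vF bar i => 6 + (cond bar (14 * (n+1)) 0) + (n+1) + (i : ℕ)
  | .vC bar j i => 6 + (cond bar (14 * (n+1)) 0) + 2*(n+1) + (j : ℕ)*(n+1) + (i : ℕ)
  | .vB bar j i => 6 + (cond bar (14 * (n+1)) 0) + 6*(n+1) + (j : ℕ)*(n+1) + (i : ℕ)
  | .vQ bar j i => 6 + (cond bar (14 * (n+1)) 0) + 10*(n+1) + (j : ℕ)*(n+1) + (i : ℕ)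

/-- The lexicographic monomial order on `X`: `t ≼_lex u` iff `t = u` or the exponents differ
somewhere and at the greatest variable (w.r.t. `vrank`) where they differ, the exponent of
`t` is smaller. -/
def lexLe (n : ℕ) (t u : Mon (MVar n)) : Prop :=
  t = u ∨ ∃ x : MVar n, t x < u x ∧ ∀ y : MVar n, vrank n x < vrank n y → t y = u y

/-- The total degree of a monomial. -/
def mdeg {σ : Type*} (t : Mon σ) : ℕ := t.sum fun _ k => k

/-- The degree lexicographic monomial order. -/
def degLexLe (n : ℕ) (t u : Mon (MVar n)) : Prop :=
  mdeg t < mdeg u ∨ (mdeg t = mdeg u ∧ lexLe n t u)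

/-- Weighted degree of a monomial with respect to a weight map `w`. -/
noncomputable def wdeg {n : ℕ} (w : MVar n → ℝ) (t : Mon (MVar n)) : ℝ :=
  t.sum fun x k => (k : ℝ) * w x

/-- The weighted monomial order determined by the weight map `w`. -/
def wLe {n : ℕ} (w : MVar n → ℝ) (t u : Mon (MVar n)) : Prop := t = u ∨ wdeg w t < wdeg w u

/-!
Modulo `⟨𝓕⟩` each binomial `p + q ∈ 𝓕` becomes an equation `p = q` (the characteristic is 2),
and everything is a computation with these equations. By induction on `m`,
`c_{jm} s_m = b_{jm}^{e(m)} c_{jm} f_m`: the relations of `P_m` let each of the `e(m-1)` factors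
`b_{1(m-1)}` produced by the inductive hypothesis be traded for `b_{4(m-1)} b_{jm}^{e(m-1)}`, so
the exponent squares. At the top, `G` gives
`ℓ c̄^{m1} c^{m2} = b_{4n}^{e(n)} c_{4n} f_n b̄^{m1} b^{m2} = c_{4n} s_n b̄^{m1} b^{m2}
 = b̄_{4n}^{e(n)} c̄_{4n} f̄_n = c̄_{4n} s̄_n = s`, so `α + s ∈ ⟨𝓕⟩` and `s ≺ α` makes `α`
non-residual.
-/

theorem mul_pow_eq_mul_pow_of_mul_eq {M : Type*} [CommMonoid M] {a x y : M} (h : a * x = a * y)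
    (k : ℕ) : a * x ^ k = a * y ^ k := by
  induction k with
  | zero => simp only [pow_zero]
  | succ k ih =>
    calc a * x ^ (k + 1) = a * x ^ k * x := by rw [pow_succ, mul_assoc]
      _ = a * x * y ^ k := by rw [ih, mul_right_comm]
      _ = a * y ^ (k + 1) := by rw [h, pow_succ', mul_assoc]

theorem monomial_mem_SF {σ : Type*} (μ : MonOrd σ) (F : Set (MvPolynomial σ (ZMod 2)))
    {α β : Mon σ} (hβα : μ.lt β α) (h : monomial α 1 + monomial β 1 ∈ Ideal.span F) :
    monomial α 1 ∈ SF μ.le F := by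
  have hsupp : ∀ γ : Mon σ, (monomial γ (1 : ZMod 2)).support = {γ} := fun γ =>
    support_monomial.trans (if_neg one_ne_zero)
  have hne : monomial β (1 : ZMod 2) ≠ monomial α 1 := fun heq =>
    hβα.2 (monomial_left_injective one_ne_zero heq)
  refine ⟨monomial β 1, h, Or.inr ⟨α, ?_, ?_, ?_⟩, hne⟩
  · simp [hsupp]
  · simpa [hsupp] using hβα.2.symm
  · rintro u (⟨hu, -⟩ | ⟨hu, -⟩) <;> rw [hsupp, Finset.mem_singleton] at hu <;> subst hu
    · exact μ.le_refl u
    · exact hβα.1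

/-- `r1`–`r7` are the relations of `P_m`, with `q = q_{·m}`, `b = b_{·(m-1)}`, `c = c_{·(m-1)}`,
`s, f = s_{m-1}, f_{m-1}`, `s', f' = s_m, f_m` and `bj, cj = b_{jm}, c_{jm}`. -/
theorem cs_eq_pow_mul_cf_of_binomials {R : Type*} [CommRing R] (q b c : Fin 4 → R)
    {s f bj cj s' f' : R} {E : ℕ} (hE : 0 < E)
    (r1 : q 0 * c 0 * s = s')
    (r2 : q 1 * c 1 * s = q 0 * b 0 * c 0 * f)
    (r3 : q 2 * c 2 * f = q 1 * c 1 * f)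
    (r4 : q 2 * b 0 * c 2 * s = q 1 * b 3 * c 1 * s)
    (r5 : q 3 * b 3 * c 3 * f = q 2 * c 2 * s)
    (r6 : q 3 * c 3 * s = f')
    (r7 : q 1 * b 2 * bj * cj * f = q 1 * b 1 * cj * f)
    (ih : ∀ k, c k * s = b k ^ E * (c k * f)) :
    cj * s' = bj ^ (E * E) * (cj * f') := by
  have trade_b1 : q 1 * cj * f * b 1 ^ E = q 1 * cj * f * (b 2 * bj) ^ E :=
    mul_pow_eq_mul_pow_of_mul_eq (by linear_combination -r7) E
  have shift : q 1 * c 1 * s * cj = bj ^ E * (q 2 * c 2 * s * cj) := by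
    linear_combination (q 1 * cj) * ih 1 + c 1 * trade_b1 - bj ^ E * b 2 ^ E * cj * r3
      - bj ^ E * q 2 * cj * ih 2
  have trade_b0 (k : ℕ) :
      q 2 * c 2 * s * cj * b 0 ^ k = q 2 * c 2 * s * cj * (b 3 * bj ^ E) ^ k :=
    mul_pow_eq_mul_pow_of_mul_eq (by linear_combination cj * r4 + b 3 * shift) k
  obtain ⟨D, rfl⟩ : ∃ D, E = D + 1 := ⟨E - 1, by omega⟩
  calc cj * s' = b 0 ^ D * (q 1 * c 1 * s * cj) := by
        linear_combination (-cj) * r1 + cj * q 0 * ih 0 - cj * b 0 ^ D * r2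
    _ = bj ^ (D + 1) * (q 2 * c 2 * s * cj * b 0 ^ D) := by linear_combination b 0 ^ D * shift
    _ = bj ^ (D + 1) * (q 2 * c 2 * s * cj * (b 3 * bj ^ (D + 1)) ^ D) := by rw [trade_b0]
    _ = bj ^ ((D + 1) * (D + 1)) * (cj * f') := by
        linear_combination bj ^ ((D + 1) * (D + 1)) * cj * (-b 3 ^ D * r5 - q 3 * ih 3 + r6)

/-- `g1`–`g7` are the relations of `G`, with `B, C, S, F = b_{4n}, c_{4n}, s_n, f_n` and
`Bb, Cb, Sb, Fb` their barred copies. -/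
theorem ell_mul_pow_eq_of_binomials {R : Type*} [CommRing R]
    {l c cb b bb B Bb C Cb S Sb F Fb s : R} {e m1 m2 : ℕ}
    (g1 : B * l * b = l * c) (g2 : B * l * bb = l * cb) (g3 : C * F = l) (g4 : Cb * Fb = C * S)
    (g5 : Bb * C * S = C * S * b) (g6 : Bb * C * S = C * S * bb) (g7 : Cb * Sb = s)
    (key : C * S = B ^ e * (C * F)) (key_bar : Cb * Sb = Bb ^ e * (Cb * Fb))
    (hm : m1 + m2 = e) :
    l * cb ^ m1 * c ^ m2 = s := by
  have hc : l * c ^ m2 = l * (B * b) ^ m2 :=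
    mul_pow_eq_mul_pow_of_mul_eq (by linear_combination -g1) m2
  have hcb : l * cb ^ m1 = l * (B * bb) ^ m1 :=
    mul_pow_eq_mul_pow_of_mul_eq (by linear_combination -g2) m1
  have hb : C * S * b ^ m2 = C * S * Bb ^ m2 :=
    mul_pow_eq_mul_pow_of_mul_eq (by linear_combination -g5) m2
  have hbb : C * S * bb ^ m1 = C * S * Bb ^ m1 :=
    mul_pow_eq_mul_pow_of_mul_eq (by linear_combination -g6) m1
  subst hm
  calc l * cb ^ m1 * c ^ m2 = B ^ (m1 + m2) * l * bb ^ m1 * b ^ m2 := by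
        linear_combination c ^ m2 * hcb + B ^ m1 * bb ^ m1 * hc
    _ = C * S * bb ^ m1 * b ^ m2 := by
        linear_combination -bb ^ m1 * b ^ m2 * (B ^ (m1 + m2) * g3 + key)
    _ = Bb ^ (m1 + m2) * (C * S) := by linear_combination b ^ m2 * hbb + Bb ^ m1 * hb
    _ = s := by linear_combination -Bb ^ (m1 + m2) * g4 - key_bar + g7

theorem en_succ (m : ℕ) : en (m + 1) = en m * en m := by
  rw [en, en, pow_succ, pow_mul, sq]

theorem en_pos (m : ℕ) : 0 < en m := Nat.two_pow_pos _

namespace FF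

variable {n : ℕ}

noncomputable abbrev xq (v : MVar n) : MPoly n ⧸ Ideal.span (FF n) := Ideal.Quotient.mk _ (X v)

theorem mk_eq_mk_of_add_mem {p q : MPoly n} (h : p + q ∈ FF n) :
    Ideal.Quotient.mk (Ideal.span (FF n)) p = Ideal.Quotient.mk _ q :=
  Ideal.Quotient.eq.2 (by rw [CharTwo.sub_eq_add]; exact Ideal.subset_span h)

theorem PP_subset (bar : Bool) : PP n bar ⊆ FF n := by
  cases bar
  exacts [fun _ hp => Or.inl (Or.inl hp), fun _ hp => Or.inl (Or.inr hp)]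

theorem cs_eq_pow_mul_cf (bar : Bool) (m : Fin (n + 1)) (j : Fin 4) :
    xq (vC bar j m) * xq (vS bar m)
      = xq (vB bar j m) ^ en m * (xq (vC bar j m) * xq (vF bar m)) := by
  induction m using Fin.induction generalizing j with
  | zero =>
    have h := mk_eq_mk_of_add_mem (PP_subset (n := n) bar (Or.inl ⟨j, rfl⟩))
    simp only [map_mul, map_pow] at h
    rw [Fin.val_zero, show en 0 = 2 from rfl]
    linear_combination -h
  | succ i ih =>
    have rel {p q : MPoly n} (h : p + q ∈ Pm n bar i) :
        Ideal.Quotient.mk (Ideal.span (FF n)) p = Ideal.Quotient.mk _ q :=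
      mk_eq_mk_of_add_mem (PP_subset bar (Or.inr (Set.mem_iUnion_of_mem i h)))
    rw [Fin.val_succ, en_succ]
    refine cs_eq_pow_mul_cf_of_binomials (fun k => xq (vQ bar k i.succ))
      (fun k => xq (vB bar k i.castSucc)) (fun k => xq (vC bar k i.castSucc))
      (s := xq (vS bar i.castSucc)) (f := xq (vF bar i.castSucc)) (en_pos i) ?_ ?_ ?_ ?_ ?_ ?_
      (by simp only [xq, ← map_mul]; exact rel (Or.inr ⟨j, rfl⟩))
      (fun k => by simpa only [Fin.val_castSucc] using ih k)
    all_goals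
      simp only [xq, ← map_mul]
      apply rel
      simp only [Pm, Set.mem_union, Set.mem_insert_iff, Set.mem_singleton_iff, true_or, or_true]

theorem monomial_add_monomial_s_mem_span {α : Mon (MVar n)} (hα : α ∈ Cmon n) :
    monomial α 1 + monomial (Finsupp.single vs 1) 1 ∈ Ideal.span (FF n) := by
  obtain ⟨m1, m2, hm, rfl⟩ := hα
  have hmon : monomial (Finsupp.single vl 1 + Finsupp.single vcb m1 + Finsupp.single vc m2) 1
      = (X vl * X vcb ^ m1 * X vc ^ m2 : MPoly n) := by
    rw [X_pow_eq_monomial, X_pow_eq_monomial, X, monomial_mul, monomial_mul, mul_one, mul_one]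
  rw [← CharTwo.sub_eq_add, ← Ideal.Quotient.eq, hmon, ← X]
  simp only [map_mul, map_pow]
  refine ell_mul_pow_eq_of_binomials (b := xq vb) (bb := xq vbb) ?_ ?_ ?_ ?_ ?_ ?_ ?_
    (cs_eq_pow_mul_cf false (Fin.last n) 3) (cs_eq_pow_mul_cf true (Fin.last n) 3) hm
  all_goals
    simp only [xq, ← map_mul]
    apply mk_eq_mk_of_add_mem (Or.inr _)
    simp only [GG, Set.mem_insert_iff, Set.mem_singleton_iff, true_or, or_true]

end FF

open MVar in
/-- If `≼` is a monomial order with `s ≺ α` for every `α ∈ C`, then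
`C ⊆ S_𝓕`: every `α ∈ C` is non-residual with respect to `𝓕` and `≼`. -/
theorem stmt8 (n : ℕ) (μ : MonOrd (MVar n))
    (h1 : ∀ α ∈ Cmon n, μ.lt (Finsupp.single vs 1) α) :
    ∀ α ∈ Cmon n, (monomial α 1 : MPoly n) ∈ SF μ.le (FF n) :=
  fun α hα => monomial_mem_SF μ (FF n) (h1 α hα) (FF.monomial_add_monomial_s_mem_span hα)
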